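/- arXiv:2112.14738 — 2 statements merged into one kernel-verified Lean document; each statement's English description precedes it below -/
import Mathlib

section
/- Let Λ = diag(λ₁, …, λ_d) with λ₁ > λ₂ > ⋯ > λ_d and minimal gap λ_gap = min_i (λ_i − λ_{i+1}). Let w be a unit vector, let R = wᵀΛw, and suppose ‖Λw − Rw‖ ≤ λ_gap γ₁ for some γ₁ ∈ (0, 1/2), and that R ∈ [(λ_{j-1}+λ_j)/2, (λ_j+λ_{j+1})/2] for some index j (with λ₀ = λ₁ and λ_{d+1} = λ_d). Then (e_jᵀ w)² ≥ 1 − 4γ₁². -/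
/-!
Write `Λ w - R w = ∑ᵢ (λᵢ - R) wᵢ eᵢ`. Because `R` lies between the midpoints `(λ_{j+1} + λ_j)/2`
and `(λ_j + λ_{j-1})/2`, every `λᵢ` with `i ≠ j` is at distance at least `λ_gap / 2` from `R`, so
`(λ_gap / 2)² (1 - w_j²) = (λ_gap / 2)² ∑_{i ≠ j} wᵢ² ≤ ‖Λ w - R w‖² ≤ (λ_gap γ)²`,
which is `1 - w_j² ≤ 4 γ²`.
-/

open Finset

namespace EuclideanSpace

variable {ι : Type*} [Fintype ι]

lemma norm_sq_diag_mul_sub_smul (μ : ι → ℝ) (w : EuclideanSpace ℝ ι) (R : ℝ) :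
    ‖(WithLp.toLp 2 (fun i => μ i * w i) : EuclideanSpace ℝ ι) - R • w‖ ^ 2 =
      ∑ i, (μ i - R) ^ 2 * w i ^ 2 := by
  rw [real_norm_sq_eq]
  refine sum_congr rfl fun i _ => ?_
  simp only [PiLp.sub_apply, PiLp.smul_apply, smul_eq_mul]
  ring

lemma sq_mul_one_sub_sq_le_norm_diag_mul_sub_smul_sq [DecidableEq ι] (μ : ι → ℝ)
    {w : EuclideanSpace ℝ ι} (hw : ‖w‖ = 1) (R : ℝ) {δ : ℝ} (hδ : 0 ≤ δ) (j : ι)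
    (hsep : ∀ i, i ≠ j → δ ≤ |μ i - R|) :
    δ ^ 2 * (1 - w j ^ 2) ≤
      ‖(WithLp.toLp 2 (fun i => μ i * w i) : EuclideanSpace ℝ ι) - R • w‖ ^ 2 := by
  have hmass : 1 - w j ^ 2 = ∑ i ∈ univ.erase j, w i ^ 2 := by
    rw [← one_pow 2, ← hw, real_norm_sq_eq, ← add_sum_erase _ _ (mem_univ j), add_sub_cancel_left]
  rw [norm_sq_diag_mul_sub_smul, hmass, mul_sum]
  calc ∑ i ∈ univ.erase j, δ ^ 2 * w i ^ 2
      ≤ ∑ i ∈ univ.erase j, (μ i - R) ^ 2 * w i ^ 2 := by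
        refine sum_le_sum fun i hi => mul_le_mul_of_nonneg_right ?_ (sq_nonneg _)
        rw [← sq_abs (μ i - R)]
        exact pow_le_pow_left₀ hδ (hsep i (ne_of_mem_erase hi)) 2
    _ ≤ ∑ i, (μ i - R) ^ 2 * w i ^ 2 :=
        sum_le_sum_of_subset_of_nonneg (erase_subset _ _) fun i _ _ => by positivity

end EuclideanSpace

section GappedSequence

variable {lam : ℕ → ℝ} {d : ℕ} {δ : ℝ}

lemma antitoneOn_Icc_of_gap (hδ : 0 ≤ δ) (hgap : ∀ i, 1 ≤ i → i < d → δ ≤ lam i - lam (i + 1)) :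
    AntitoneOn lam (Set.Icc 1 d) :=
  antitoneOn_of_add_one_le Set.ordConnected_Icc fun a _ ha ha1 =>
    by linarith [hgap a ha.1 (Set.mem_Icc.mp ha1).2]

lemma half_gap_le_abs_sub (hδ : 0 ≤ δ) (hgap : ∀ i, 1 ≤ i → i < d → δ ≤ lam i - lam (i + 1))
    {R : ℝ} {j : ℕ} (hj1 : 1 ≤ j) (hjd : j ≤ d)
    (hRlo : (lam j + lam (j + 1)) / 2 ≤ R) (hRhi : R ≤ (lam (j - 1) + lam j) / 2)
    {k : ℕ} (hk1 : 1 ≤ k) (hkd : k ≤ d) (hkj : k ≠ j) :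
    δ / 2 ≤ |lam k - R| := by
  have hanti := antitoneOn_Icc_of_gap hδ hgap
  rcases lt_or_gt_of_ne hkj with hlt | hgt
  · have hle : lam (j - 1) ≤ lam k := hanti ⟨hk1, hkd⟩ ⟨by omega, by omega⟩ (by omega)
    have hgap' : δ ≤ lam (j - 1) - lam (j - 1 + 1) := hgap (j - 1) (by omega) (by omega)
    rw [Nat.sub_add_cancel hj1] at hgap'
    rw [abs_of_nonneg (by linarith)]
    linarith
  · have hle : lam k ≤ lam (j + 1) := hanti ⟨by omega, by omega⟩ ⟨hk1, hkd⟩ hgt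
    have hgap' := hgap j hj1 (by omega)
    rw [abs_of_nonpos (by linarith)]
    linarith

end GappedSequence

theorem approx_eigenvector_alignment (d : ℕ) (lam : ℕ → ℝ)
    (lamGap : ℝ) (hGap0 : 0 < lamGap)
    (hGapLe : ∀ i, 1 ≤ i → i < d → lamGap ≤ lam i - lam (i+1))
    (w : EuclideanSpace ℝ (Fin d)) (hw : ‖w‖ = 1)
    (γ : ℝ)
    (R : ℝ)
    (hgrad : ‖(show EuclideanSpace ℝ (Fin d) from WithLp.toLp 2 (fun i => lam (i.val + 1) * w i)) - R • w‖
      ≤ lamGap * γ)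
    (j : ℕ) (hj1 : 1 ≤ j) (hjd : j ≤ d)
    (hRlo : (lam j + lam (j+1)) / 2 ≤ R)
    (hRhi : R ≤ (lam (j-1) + lam j) / 2) :
    1 - 4 * γ^2 ≤ (w ⟨j-1, by omega⟩)^2 := by
  have hsep : ∀ i : Fin d, i ≠ ⟨j - 1, by omega⟩ → lamGap / 2 ≤ |lam (i.val + 1) - R| :=
    fun i hi => half_gap_le_abs_sub hGap0.le hGapLe hj1 hjd hRlo hRhi (by omega) i.isLt
      fun h => hi (Fin.ext (by dsimp only; omega))
  have hbound :
      (lamGap / 2) ^ 2 * (1 - w ⟨j - 1, by omega⟩ ^ 2) ≤ (lamGap / 2) ^ 2 * (4 * γ ^ 2) :=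
    calc (lamGap / 2) ^ 2 * (1 - w ⟨j - 1, by omega⟩ ^ 2)
        ≤ ‖(show EuclideanSpace ℝ (Fin d) from WithLp.toLp 2 (fun i => lam (i.val + 1) * w i))
            - R • w‖ ^ 2 :=
          EuclideanSpace.sq_mul_one_sub_sq_le_norm_diag_mul_sub_smul_sq _ hw R
            (by positivity) _ hsep
      _ ≤ (lamGap * γ) ^ 2 := pow_le_pow_left₀ (norm_nonneg _) hgrad 2
      _ = (lamGap / 2) ^ 2 * (4 * γ ^ 2) := by ring
  linarith [le_of_mul_le_mul_left hbound (by positivity)]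
end

section
/- Let A, B be symmetric matrices with B positive definite and suppose B^{-1/2} A B^{-1/2} has distinct eigenvalues λ₁ > λ₂ > ⋯ > λ_d. Let v_j be a unit vector with A v_j = λ_j B v_j (j ≥ 2) and v₁ a unit vector with A v₁ = λ₁ B v₁. Then for the manifold Hessian H(v_j) = −2[A − λ_j B]/(v_jᵀ B v_j) and any scalar c, (v₁ − c v_j)ᵀ H(v_j) (v₁ − c v_j) = −2(λ₁ − λ_j)(v₁ᵀ B v₁)/(v_jᵀ B v_j) ≤ −2(λ₁ − λ₂) λ_min(B)/‖B‖. -/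
open Matrix

/-!
Writing `M = A - λⱼ B`, the eigen-equations give `M vⱼ = 0` and `M v₁ = (λ₁ - λⱼ) B v₁`, so the
quadratic form of `M` at `v₁ - c vⱼ` is `(λ₁ - λⱼ) (v₁ᵀ B v₁ - c vⱼᵀ B v₁)`. The cross term vanishes
because generalized eigenvectors of a symmetric pencil for distinct eigenvalues are
`B`-orthogonal. The bound then follows from `λ₁ - λⱼ ≥ λ₁ - λ₂ > 0`,
`v₁ᵀ B v₁ ≥ λ_min(B)` and `vⱼᵀ B vⱼ ≤ ‖B‖` for unit vectors.
-/

section GeneralizedEigen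

variable {n K : Type*} [Fintype n]

lemma Matrix.IsSymm.dotProduct_mulVec_comm [CommSemiring K] {M : Matrix n n K} (hM : M.IsSymm)
    (u w : n → K) : u ⬝ᵥ M *ᵥ w = w ⬝ᵥ M *ᵥ u := by
  rw [dotProduct_mulVec, ← mulVec_transpose, hM, dotProduct_comm]

lemma dotProduct_mulVec_eq_zero_of_genEigen [CommRing K] [IsDomain K] {A B : Matrix n n K}
    (hA : A.IsSymm) (hB : B.IsSymm) {u w : n → K} {μ ν : K}
    (hu : A *ᵥ u = μ • B *ᵥ u) (hw : A *ᵥ w = ν • B *ᵥ w) (hμν : μ ≠ ν) :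
    w ⬝ᵥ B *ᵥ u = 0 := by
  have h : μ * (w ⬝ᵥ B *ᵥ u) = ν * (w ⬝ᵥ B *ᵥ u) :=
    calc μ * (w ⬝ᵥ B *ᵥ u) = w ⬝ᵥ A *ᵥ u := by rw [hu, dotProduct_smul, smul_eq_mul]
      _ = u ⬝ᵥ A *ᵥ w := hA.dotProduct_mulVec_comm w u
      _ = ν * (u ⬝ᵥ B *ᵥ w) := by rw [hw, dotProduct_smul, smul_eq_mul]
      _ = ν * (w ⬝ᵥ B *ᵥ u) := by rw [hB.dotProduct_mulVec_comm u w]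
  exact (mul_eq_mul_right_iff.mp h).resolve_left hμν

lemma dotProduct_sub_smul_mulVec_of_genEigen [CommRing K] {A B : Matrix n n K} {u w : n → K}
    {μ ν : K} (hu : A *ᵥ u = μ • B *ᵥ u) (hw : A *ᵥ w = ν • B *ᵥ w)
    (horth : w ⬝ᵥ B *ᵥ u = 0) (c : K) :
    (u - c • w) ⬝ᵥ (A - ν • B) *ᵥ (u - c • w) = (μ - ν) * (u ⬝ᵥ B *ᵥ u) := by
  have hMu : (A - ν • B) *ᵥ u = (μ - ν) • B *ᵥ u := by
    rw [sub_mulVec, smul_mulVec, hu, sub_smul]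
  have hMw : (A - ν • B) *ᵥ w = 0 := by
    rw [sub_mulVec, smul_mulVec, hw, sub_self]
  rw [mulVec_sub, mulVec_smul, hMu, hMw, smul_zero, sub_zero, sub_dotProduct, smul_dotProduct,
    dotProduct_smul, dotProduct_smul, horth, smul_eq_mul, smul_eq_mul, smul_eq_mul, mul_zero,
    mul_zero, sub_zero]

end GeneralizedEigen

theorem manifold_hessian_negative_curvature (d : ℕ) (hd : 1 < d)
    (A B : Matrix (Fin d) (Fin d) ℝ) (hA : A.IsSymm) (hB : B.PosDef)
    (lam : Fin d → ℝ) (hdec : ∀ i k : Fin d, i < k → lam k < lam i)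
    (lamB Bnorm : ℝ) (hlamB : 0 < lamB)
    (hBlo : ∀ v : Fin d → ℝ, lamB * (v ⬝ᵥ v) ≤ v ⬝ᵥ B.mulVec v)
    (hBhi : ∀ v : Fin d → ℝ, v ⬝ᵥ B.mulVec v ≤ Bnorm * (v ⬝ᵥ v))
    (j : Fin d) (hj : 1 ≤ j.val)
    (vj v1 : Fin d → ℝ) (hvj : vj ⬝ᵥ vj = 1) (hv1 : v1 ⬝ᵥ v1 = 1)
    (hevj : A.mulVec vj = lam j • B.mulVec vj)
    (hev1 : A.mulVec v1 = lam ⟨0, by omega⟩ • B.mulVec v1)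
    (c : ℝ) :
    (v1 - c • vj) ⬝ᵥ
        (((-2 : ℝ) / (vj ⬝ᵥ B.mulVec vj)) • (A - lam j • B)).mulVec (v1 - c • vj)
      = -2 * (lam ⟨0, by omega⟩ - lam j) * (v1 ⬝ᵥ B.mulVec v1) / (vj ⬝ᵥ B.mulVec vj) ∧
    (v1 - c • vj) ⬝ᵥ
        (((-2 : ℝ) / (vj ⬝ᵥ B.mulVec vj)) • (A - lam j • B)).mulVec (v1 - c • vj)
      ≤ -2 * (lam ⟨0, by omega⟩ - lam ⟨1, hd⟩) * lamB / Bnorm := by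
  have hanti : StrictAnti lam := hdec
  have h01 : lam ⟨1, hd⟩ < lam ⟨0, by omega⟩ := hanti (by simp [Fin.lt_def])
  have h1j : lam j ≤ lam ⟨1, hd⟩ := hanti.antitone (by simpa [Fin.le_def] using hj)
  have hp : lamB ≤ v1 ⬝ᵥ B *ᵥ v1 := by simpa [hv1] using hBlo v1
  have hq_lo : lamB ≤ vj ⬝ᵥ B *ᵥ vj := by simpa [hvj] using hBlo vj
  have hq_hi : vj ⬝ᵥ B *ᵥ vj ≤ Bnorm := by simpa [hvj] using hBhi vj
  have horth : vj ⬝ᵥ B *ᵥ v1 = 0 :=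
    dotProduct_mulVec_eq_zero_of_genEigen hA (isHermitian_iff_isSymm.mp hB.isHermitian)
      hev1 hevj (by linarith)
  have key := dotProduct_sub_smul_mulVec_of_genEigen hev1 hevj horth c
  rw [smul_mulVec, dotProduct_smul, key, smul_eq_mul]
  refine ⟨by ring, ?_⟩
  have hbound : (lam ⟨0, by omega⟩ - lam ⟨1, hd⟩) * lamB / Bnorm
      ≤ (lam ⟨0, by omega⟩ - lam j) * (v1 ⬝ᵥ B *ᵥ v1) / (vj ⬝ᵥ B *ᵥ vj) :=
    div_le_div₀ (mul_nonneg (by linarith) (hlamB.le.trans hp))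
      (mul_le_mul (by linarith) hp hlamB.le (by linarith)) (hlamB.trans_le hq_lo) hq_hi
  rw [div_mul_eq_mul_div, mul_div_assoc (-2 : ℝ), mul_assoc (-2 : ℝ), mul_div_assoc (-2 : ℝ)]
  linarith
end
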